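/- arXiv:1611.07146 — 2 statements merged into one kernel-verified Lean document; each statement's English description precedes it below -/
import Mathlib

section
/- Two normal-form pairs (e¹, a e¹ + s f¹ + d f^n) and (e¹, a' e¹ + s f¹ + d f^n) with gcd(a,d) = gcd(a',d) = 1 lie in the same diagonal Sp(2n,ℤ)-orbit if and only if a ≡ a' (mod d). -/
open Matrix

/-- The standard basis vector `eᵢ` of `ℤ^{2n}`. -/
def eVec (n : ℕ) (i : Fin n) : (Fin n ⊕ Fin n) → ℤ := Pi.single (Sum.inl i) 1

/-- The standard basis vector `fᵢ` of `ℤ^{2n}`. -/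
def fVec (n : ℕ) (i : Fin n) : (Fin n ⊕ Fin n) → ℤ := Pi.single (Sum.inr i) 1

/-- The normal form second vector `a e¹ + s f¹ + d fⁿ`. -/
def normalForm (n : ℕ) (hn : 2 ≤ n) (a s d : ℤ) : (Fin n ⊕ Fin n) → ℤ :=
  a • eVec n ⟨0, by omega⟩ + s • fVec n ⟨0, by omega⟩ + d • fVec n ⟨n - 1, by omega⟩

/-!
An integer matrix fixing `e¹` preserves, modulo `d`, the `e¹`-coordinate of any vector whose
other coordinates are divisible by `d`; since `d ∣ s`, this forces `a ≡ a' [ZMOD d]`.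
Conversely, write `s = d m` and `a' = a + d k`. For a symmetric `B` the shear
`(x, y) ↦ (x + B y, y)` is symplectic and fixes `e¹`, and
`B = k (E₁ₙ + Eₙ₁) - k m Eₙₙ` sends the `f`-part `d (m ε₁ + εₙ)` of the normal form to `d k ε₁`.
-/

namespace Matrix

variable {ι : Type*} [DecidableEq ι] {R : Type*} [CommRing R]

def shearBlock (i j : ι) (k m : R) : Matrix ι ι R :=
  single i j k + single j i k - single j j (k * m)

theorem shearBlock_transpose (i j : ι) (k m : R) : (shearBlock i j k m)ᵀ = shearBlock i j k m := by
  simp only [shearBlock, transpose_add, transpose_sub, transpose_single]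
  abel

variable [Fintype ι]

theorem shearBlock_mulVec {i j : ι} (hij : i ≠ j) (k m d : R) :
    shearBlock i j k m *ᵥ (Pi.single i (d * m) + Pi.single j d) = Pi.single i (d * k) := by
  ext l
  obtain rfl | hil := eq_or_ne i l
  · simp [shearBlock, mulVec_add, hij, hij.symm]
  obtain rfl | hjl := eq_or_ne j l
  · simp [shearBlock, mulVec_add, hij, hij.symm]
    ring
  · simp [shearBlock, mulVec_add, hil, hjl]

theorem fromBlocks_one_mem_symplecticGroup {B : Matrix ι ι R} (hB : Bᵀ = B) :
    fromBlocks 1 B 0 1 ∈ symplecticGroup ι R :=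
  SymplecticGroup.fromBlocks_mem_iff.2 ⟨by simp, by simp [hB], by simp⟩

theorem fromBlocks_one_mulVec_sumElim (B : Matrix ι ι R) (x y : ι → R) :
    fromBlocks 1 B 0 1 *ᵥ Sum.elim x y = Sum.elim (x + B *ᵥ y) y := by
  simp [fromBlocks_mulVec]

theorem modEq_mulVec_apply_of_mulVec_single {γ : Matrix ι ι ℤ} {i : ι}
    (hγ : γ *ᵥ Pi.single i 1 = Pi.single i 1) {d : ℤ} {v : ι → ℤ} (hv : ∀ j ≠ i, d ∣ v j) :
    v i ≡ (γ *ᵥ v) i [ZMOD d] := by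
  have hsplit : v = v i • Pi.single i 1 + Function.update v i 0 := by
    ext j
    by_cases hj : j = i <;> simp [hj]
  have hrest : d ∣ (γ *ᵥ Function.update v i 0) i :=
    Finset.dvd_sum fun j _ => dvd_mul_of_dvd_right
      (by by_cases hj : j = i <;> simp [hj, hv]) _
  conv_rhs => rw [hsplit, mulVec_add, mulVec_smul, hγ]
  exact Int.modEq_iff_dvd.2 (by simpa using hrest)

end Matrix

section NormalForm

variable {n : ℕ} (hn : 2 ≤ n)

theorem eVec_eq_sumElim (i : Fin n) : eVec n i = Sum.elim (Pi.single i 1) 0 := by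
  ext (j | j) <;> simp [eVec, Pi.single_apply]

theorem normalForm_eq_sumElim (a s d : ℤ) :
    normalForm n hn a s d = Sum.elim (Pi.single ⟨0, Nat.zero_lt_of_lt hn⟩ a)
      (Pi.single ⟨0, Nat.zero_lt_of_lt hn⟩ s + Pi.single ⟨n - 1, Nat.sub_one_lt_of_lt hn⟩ d) := by
  ext (j | j) <;> simp [normalForm, eVec, fVec, Pi.single_apply]

theorem dvd_normalForm_apply (a : ℤ) {s d : ℤ} (hds : d ∣ s) :
    ∀ j ≠ Sum.inl ⟨0, Nat.zero_lt_of_lt hn⟩, d ∣ normalForm n hn a s d j := by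
  rintro (j | j) hj
  · simp_all [normalForm_eq_sumElim]
  · simp only [normalForm_eq_sumElim, Sum.elim_inr, Pi.add_apply, Pi.single_apply]
    split_ifs <;> simp [hds]

end NormalForm

/-- Two normal-form pairs `(e¹, a e¹ + s f¹ + d fⁿ)` and
`(e¹, a' e¹ + s f¹ + d fⁿ)` with `gcd(a,d) = gcd(a',d) = 1` lie in the same diagonal
`Sp(2n,ℤ)`-orbit iff `a ≡ a' (mod d)`. -/
theorem normal_form_orbit_iff (n : ℕ) (hn : 2 ≤ n)
    (a a' s d : ℤ) (hds : d ∣ s) :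
    (∃ γ ∈ Matrix.symplecticGroup (Fin n) ℤ,
        γ *ᵥ eVec n ⟨0, by omega⟩ = eVec n ⟨0, by omega⟩ ∧
        γ *ᵥ normalForm n hn a s d = normalForm n hn a' s d) ↔
      a ≡ a' [ZMOD d] := by
  constructor
  · rintro ⟨γ, -, he, hv⟩
    have hmod := modEq_mulVec_apply_of_mulVec_single he (dvd_normalForm_apply hn a hds)
    rw [hv] at hmod
    simpa [normalForm_eq_sumElim] using hmod
  · intro h
    obtain ⟨m, rfl⟩ := hds
    obtain ⟨k, hk⟩ := Int.modEq_iff_dvd.1 h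
    have hij : (⟨0, by omega⟩ : Fin n) ≠ ⟨n - 1, by omega⟩ := by simp [Fin.ext_iff]; omega
    refine ⟨fromBlocks 1 (shearBlock ⟨0, by omega⟩ ⟨n - 1, by omega⟩ k m) 0 1,
      fromBlocks_one_mem_symplecticGroup (shearBlock_transpose _ _ k m), ?_, ?_⟩
    · rw [eVec_eq_sumElim, fromBlocks_one_mulVec_sumElim, mulVec_zero, add_zero]
    · rw [normalForm_eq_sumElim, normalForm_eq_sumElim, fromBlocks_one_mulVec_sumElim,
        shearBlock_mulVec hij, ← Pi.single_add, ← hk, add_sub_cancel]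
end

section
/- With X as above and φ Euler's totient function, the Dirichlet series of the Dirichlet convolution φ * X equals ζ(w−2n+1)/ζ(w) for Re(w) sufficiently large. -/
/-! Write `k = 2n - 1` and `μ·id` for the pointwise product `d ↦ μ(d) d`. Expanding the
product over primes gives `X = μ·id * id^k`, and `φ = id * μ`. Pointwise multiplication by the
completely multiplicative `id` respects Dirichlet convolution, so
`id * μ·id = (ζ * μ)·id = 1`, whence `φ * X = μ * id^k`, whose Dirichlet series is
`ζ(w - k) / ζ(w)` for `Re w > k + 1`. -/

open Complex

/-- The multiplicative function `X(s) = s^{2n-1} ∏_{p ∣ s} (1 - p^{-(2n-2)})`. -/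
noncomputable def Xfun (n s : ℕ) : ℝ :=
  (s : ℝ) ^ (2 * n - 1) * ∏ p ∈ s.primeFactors, (1 - (p : ℝ) ^ (-((2 * (n : ℤ) - 2))))

/-- The Dirichlet convolution `(φ * X)(s) = ∑_{d ∣ s} φ(d) X(s/d)`. -/
noncomputable def phiX (n s : ℕ) : ℝ :=
  ∑ d ∈ s.divisors, (Nat.totient d : ℝ) * Xfun n (s / d)

open ArithmeticFunction Finset
open scoped ArithmeticFunction.Moebius ArithmeticFunction.zeta

namespace ArithmeticFunction

theorem IsMultiplicative.prod_primeFactors_one_sub {R : Type*} [CommRing R]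
    {f : ArithmeticFunction R} (hf : f.IsMultiplicative) {s : ℕ} (hs : s ≠ 0) :
    ∏ p ∈ s.primeFactors, (1 - f p) = ∑ d ∈ s.divisors, μ d * f d := by
  rw [← Nat.primeFactors_radical, hf.prodPrimeFactors_one_sub_of_squarefree _
    UniqueFactorizationMonoid.squarefree_radical]
  refine sum_subset (Nat.divisors_subset_of_dvd hs UniqueFactorizationMonoid.radical_dvd_self)
    fun d hds hdr => ?_
  have hsq : ¬ Squarefree d := fun hsq => hdr <| Nat.mem_divisors.2 ⟨by
    rw [← Nat.prod_primeFactors_of_squarefree hsq, ← Nat.radical_eq_prod_primeFactors,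
      Nat.radical_dvd_iff UniqueFactorizationMonoid.radical_ne_zero, Nat.primeFactors_radical]
    exact Nat.primeFactors_mono (Nat.dvd_of_mem_divisors hds) hs,
    UniqueFactorizationMonoid.radical_ne_zero⟩
  simp [moebius_eq_zero_of_not_squarefree hsq]

theorem pmul_mul_of_map_mul {R : Type*} [CommSemiring R] (f g : ArithmeticFunction R)
    {h : ArithmeticFunction R} (hh : ∀ a b, h (a * b) = h a * h b) :
    (f * g).pmul h = f.pmul h * g.pmul h := by
  ext n
  simp only [pmul_apply, mul_apply, sum_mul]
  refine sum_congr rfl fun x hx => ?_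
  rw [← (Nat.mem_divisorsAntidiagonal.1 hx).1, hh]
  ring

theorem one_pmul {R : Type*} [MonoidWithZero R] {h : ArithmeticFunction R} (hh : h 1 = 1) :
    (1 : ArithmeticFunction R).pmul h = 1 := by
  ext n
  rcases eq_or_ne n 1 with rfl | hn
  · simp [hh]
  · simp [one_apply_ne hn]

theorem natCoe_id_mul_pmul_moebius :
    (↑ArithmeticFunction.id : ArithmeticFunction ℤ) * pmul μ ↑ArithmeticFunction.id = 1 :=
  calc _ = ((ζ : ArithmeticFunction ℤ) * μ).pmul ↑ArithmeticFunction.id := by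
        rw [pmul_mul_of_map_mul _ _ fun a b => by simp, zeta_pmul]
    _ = 1 := by rw [coe_zeta_mul_moebius, one_pmul (by simp)]

def totient : ArithmeticFunction ℤ := ⟨fun d => d.totient, by simp⟩

theorem totient_apply (n : ℕ) : totient n = n.totient := rfl

theorem totient_eq_id_mul_moebius : totient = ↑ArithmeticFunction.id * μ := by
  have hsum : (ζ : ArithmeticFunction ℤ) * totient = ↑ArithmeticFunction.id := by
    ext n
    rw [coe_zeta_mul_apply]
    simp [totient_apply, ← Nat.cast_sum, Nat.sum_totient]
  rw [← hsum, mul_comm (ζ : ArithmeticFunction ℤ), mul_assoc, coe_zeta_mul_moebius, mul_one]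

end ArithmeticFunction

theorem pow_succ_mul_prod_one_sub_inv_pow (j : ℕ) {s : ℕ} (hs : s ≠ 0) :
    (s : ℝ) ^ (j + 1) * ∏ p ∈ s.primeFactors, (1 - ((p : ℝ) ^ j)⁻¹) =
      ((pmul μ ↑ArithmeticFunction.id * ↑(pow (j + 1)) : ArithmeticFunction ℤ) s : ℝ) := by
  have hf : ((ζ : ArithmeticFunction ℝ).pdiv ↑(pow j)).IsMultiplicative :=
    isMultiplicative_zeta.natCast.pdiv isMultiplicative_pow.natCast
  have hprod : ∏ p ∈ s.primeFactors, (1 - ((p : ℝ) ^ j)⁻¹) =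
      ∏ p ∈ s.primeFactors, (1 - (ζ : ArithmeticFunction ℝ).pdiv ↑(pow j) p) :=
    prod_congr rfl fun p hp => by
      simp [pdiv_apply, pow_apply, (Nat.prime_of_mem_primeFactors hp).ne_zero]
  rw [hprod, hf.prod_primeFactors_one_sub hs, mul_sum, mul_apply,
    Nat.sum_divisorsAntidiagonal
      fun a b => pmul μ ↑ArithmeticFunction.id a * (↑(pow (j + 1)) : ArithmeticFunction ℤ) b,
    Int.cast_sum]
  refine sum_congr rfl fun d hd => ?_
  obtain ⟨e, rfl⟩ := Nat.dvd_of_mem_divisors hd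
  have hd0 : d ≠ 0 := left_ne_zero_of_mul hs
  simp only [Nat.cast_mul, pdiv_apply, natCoe_apply, zeta_apply, hd0, ↓reduceIte, Nat.cast_one,
    pow_apply, and_false, Nat.cast_pow, one_div, pmul_apply, id_apply,
    Nat.mul_div_cancel_left e (Nat.pos_of_ne_zero hd0), Nat.add_eq_zero_iff, one_ne_zero,
    false_and, Int.cast_mul, Int.cast_natCast, Int.cast_pow]
  field_simp
  ring

theorem Xfun_eq_pmul_moebius_id_mul_pow {n s : ℕ} (hn : 1 ≤ n) (hs : s ≠ 0) :
    Xfun n s = ((pmul μ ↑ArithmeticFunction.id * ↑(pow (2 * n - 1)) :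
      ArithmeticFunction ℤ) s : ℝ) := by
  obtain ⟨m, rfl⟩ := Nat.exists_eq_add_of_le' hn
  rw [Xfun, show 2 * (m + 1) - 1 = 2 * m + 1 by omega, ← pow_succ_mul_prod_one_sub_inv_pow _ hs]
  congr 1
  refine prod_congr rfl fun p _ => ?_
  rw [← zpow_natCast, ← zpow_neg]
  push_cast
  ring_nf

theorem phiX_eq_moebius_mul_pow {n : ℕ} (hn : 1 ≤ n) (s : ℕ) :
    phiX n s = ((μ * ↑(pow (2 * n - 1)) : ArithmeticFunction ℤ) s : ℝ) := by
  have hconv : totient * (pmul μ ↑ArithmeticFunction.id * ↑(pow (2 * n - 1))) =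
      μ * ↑(pow (2 * n - 1)) := by
    rw [totient_eq_id_mul_moebius]
    calc _ = (↑ArithmeticFunction.id * pmul μ ↑ArithmeticFunction.id) *
          (μ * ↑(pow (2 * n - 1))) := by ring
      _ = _ := by rw [natCoe_id_mul_pmul_moebius, one_mul]
  rcases eq_or_ne s 0 with rfl | hs
  · simp [phiX]
  rw [← hconv, mul_apply, Nat.sum_divisorsAntidiagonal fun a b =>
      totient a *
        (pmul μ ↑ArithmeticFunction.id * ↑(pow (2 * n - 1)) : ArithmeticFunction ℤ) b,
    Int.cast_sum, phiX]
  refine sum_congr rfl fun d hd => ?_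
  obtain ⟨e, rfl⟩ := Nat.dvd_of_mem_divisors hd
  rw [Nat.mul_div_cancel_left e (Nat.pos_of_ne_zero (left_ne_zero_of_mul hs)),
    Xfun_eq_pmul_moebius_id_mul_pow hn (right_ne_zero_of_mul hs), totient_apply, Int.cast_mul,
    Int.cast_natCast]

open LSeries LSeries.notation

theorem LSeries.term_pow (k : ℕ) (w : ℂ) : term ↗(pow k) w = term 1 (w - k) := by
  ext m
  rcases eq_or_ne m 0 with rfl | hm
  · simp
  rw [term_of_ne_zero hm, term_of_ne_zero hm, cpow_sub _ _ (Nat.cast_ne_zero.2 hm), cpow_natCast]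
  simp [pow_apply, hm]

theorem LSeriesSummable_pow {k : ℕ} {w : ℂ} (hw : 1 < (w - k).re) :
    LSeriesSummable ↗(pow k) w := by
  rw [LSeriesSummable, term_pow]
  exact LSeriesSummable_one_iff.2 hw

theorem LSeries_pow {k : ℕ} {w : ℂ} (hw : 1 < (w - k).re) :
    L ↗(pow k) w = riemannZeta (w - k) := by
  rw [LSeries, term_pow]
  exact LSeries_one_eq_riemannZeta hw

theorem LSeries_moebius {w : ℂ} (hw : 1 < w.re) : L ↗μ w = (riemannZeta w)⁻¹ := by
  rw [← LSeries_one_eq_riemannZeta hw]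
  exact eq_inv_of_mul_eq_one_right (LSeries_one_mul_Lseries_moebius hw)

theorem LSeries_moebius_mul_pow {k : ℕ} {w : ℂ} (hw : k + 1 < w.re) :
    L ↗(μ * ↑(pow k) : ArithmeticFunction ℤ) w = riemannZeta (w - k) / riemannZeta w := by
  have hw₁ : 1 < w.re := by linarith [(Nat.cast_nonneg k : (0 : ℝ) ≤ k)]
  have hwk : 1 < (w - k).re := by rw [sub_re, natCast_re]; linarith
  have hcoe : ↗(μ * ↑(pow k) : ArithmeticFunction ℤ) =
      ↗((μ : ArithmeticFunction ℂ) * ↑(pow k)) := by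
    ext m
    rw [← intCoe_apply, intCoe_mul, coe_coe]
  rw [hcoe, LSeries_mul' (by simpa using LSeriesSummable_moebius_iff.2 hw₁)
    (by simpa using LSeriesSummable_pow hwk)]
  simp only [intCoe_apply, natCoe_apply]
  rw [LSeries_moebius hw₁, LSeries_pow hwk, div_eq_mul_inv, mul_comm]

/-- The Dirichlet series of the Dirichlet convolution `φ * X` equals
`ζ(w - 2n + 1)/ζ(w)` for `Re(w)` sufficiently large. -/
theorem phiX_dirichlet_series (n : ℕ) (hn : 1 ≤ n) :
    ∃ W : ℝ, ∀ w : ℂ, W < w.re →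
      ∑' s : ℕ+, (phiX n s : ℂ) / ((s : ℕ) : ℂ) ^ w =
        riemannZeta (w - (2 * n - 1)) / riemannZeta w := by
  have hk : ((2 * n - 1 : ℕ) : ℝ) = 2 * n - 1 := by
    rw [Nat.cast_sub (by omega)]
    push_cast
    ring
  refine ⟨2 * n, fun w hw => ?_⟩
  rw [show (2 * n - 1 : ℂ) = ((2 * n - 1 : ℕ) : ℂ) by exact_mod_cast hk.symm,
    ← LSeries_moebius_mul_pow (by linarith), LSeries,
    ← tsum_pnat_eq_tsum_of_eq_zero (term_zero _ _)]
  refine tsum_congr fun s => ?_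
  rw [term_of_ne_zero s.ne_zero, phiX_eq_moebius_mul_pow hn, ofReal_intCast]
end
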